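/- arXiv:1912.01267 — 4 statements merged into one kernel-verified Lean document; each statement's English description precedes it below -/
import Mathlib

section
/- Let f : U → V be a diffeomorphism between open subsets of ℝ, and define the induced map F(x₀,x₁,x₂) = (f(x₀), x₁ + ln|f'(x₀)|, x₂/f'(x₀) + f''(x₀)/f'(x₀)²) on U × ℝ × ℝ. Then the pullback under F of the 3-form dy₀ ∧ dy₁ ∧ dy₂ equals dx₀ ∧ dx₁ ∧ dx₂; in particular the 3-form -dx₀ ∧ dx₁ ∧ dx₂ is invariant under all such coordinate transformations. -/
open Real

/-- The standard volume 3-form `dx₀ ∧ dx₁ ∧ dx₂` on `ℝ × ℝ × ℝ`, evaluated on three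
vectors. -/
noncomputable def vol3 (v w u : ℝ × ℝ × ℝ) : ℝ :=
  Matrix.det !![v.1, w.1, u.1; v.2.1, w.2.1, u.2.1; v.2.2, w.2.2, u.2.2]

/-- If `f : U → V` is a diffeomorphism between open subsets of `ℝ` and
`F(x₀,x₁,x₂) = (f x₀, x₁ + ln |f' x₀|, x₂ / f' x₀ + f'' x₀ / (f' x₀)²)`, then the
pullback of `dy₀ ∧ dy₁ ∧ dy₂` under `F` is `dx₀ ∧ dx₁ ∧ dx₂`, i.e. for every point
of `U × ℝ × ℝ` and all vectors `v w u` one has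
`(dy₀∧dy₁∧dy₂)(DF v, DF w, DF u) = (dx₀∧dx₁∧dx₂)(v,w,u)`; in particular the form
`-dx₀ ∧ dx₁ ∧ dx₂` is invariant as well. -/
theorem stmt1 (U V : Set ℝ) (hU : IsOpen U) (hV : IsOpen V)
    (f : ℝ → ℝ) (hf : ContDiffOn ℝ (⊤ : ℕ∞) f U) (hfV : Set.BijOn f U V)
    (hf' : ∀ x ∈ U, deriv f x ≠ 0)
    (F : ℝ × ℝ × ℝ → ℝ × ℝ × ℝ)
    (hF : ∀ x : ℝ × ℝ × ℝ, F x =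
      (f x.1, x.2.1 + Real.log |deriv f x.1|,
        x.2.2 / deriv f x.1 + deriv (deriv f) x.1 / (deriv f x.1) ^ 2)) :
    ∀ x : ℝ × ℝ × ℝ, x.1 ∈ U → ∀ v w u : ℝ × ℝ × ℝ,
      vol3 (fderiv ℝ F x v) (fderiv ℝ F x w) (fderiv ℝ F x u) = vol3 v w u ∧
      -vol3 (fderiv ℝ F x v) (fderiv ℝ F x w) (fderiv ℝ F x u) = -vol3 v w u := by
  intro x hx v w u
  have hFeq : F = fun x : ℝ × ℝ × ℝ =>
      (f x.1, x.2.1 + Real.log (deriv f x.1),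
        x.2.2 * (deriv f x.1)⁻¹ + deriv (deriv f) x.1 * ((deriv f x.1) ^ 2)⁻¹) := by
    funext y; rw [hF y, Real.log_abs, div_eq_mul_inv, div_eq_mul_inv]
  subst hFeq
  set a := deriv f x.1 with ha_def
  have ha : a ≠ 0 := hf' x.1 hx
  -- smoothness facts
  have hf1 : ContDiffOn ℝ (⊤ : ℕ∞) (deriv f) U := hf.deriv_of_isOpen hU (by simp)
  have hf2 : ContDiffOn ℝ (⊤ : ℕ∞) (deriv (deriv f)) U := hf1.deriv_of_isOpen hU (by simp)
  have hmem : U ∈ nhds x.1 := hU.mem_nhds hx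
  have h1 : HasDerivAt f a x.1 :=
    ((hf.contDiffAt hmem).differentiableAt (by simp)).hasDerivAt
  have h2 : HasDerivAt (deriv f) (deriv (deriv f) x.1) x.1 :=
    ((hf1.contDiffAt hmem).differentiableAt (by simp)).hasDerivAt
  have h3 : HasDerivAt (deriv (deriv f)) (deriv (deriv (deriv f)) x.1) x.1 :=
    ((hf2.contDiffAt hmem).differentiableAt (by simp)).hasDerivAt
  -- component derivatives
  have hc0 : HasFDerivAt (fun y : ℝ × ℝ × ℝ => f y.1)
      ((ContinuousLinearMap.smulRight (1 : ℝ →L[ℝ] ℝ) a).comp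
        (ContinuousLinearMap.fst ℝ ℝ (ℝ × ℝ))) x :=
    h1.hasFDerivAt.comp x (hasFDerivAt_fst)
  have hphi1 : HasFDerivAt (fun y : ℝ × ℝ × ℝ => deriv f y.1)
      ((ContinuousLinearMap.smulRight (1 : ℝ →L[ℝ] ℝ) (deriv (deriv f) x.1)).comp
        (ContinuousLinearMap.fst ℝ ℝ (ℝ × ℝ))) x :=
    h2.hasFDerivAt.comp x (hasFDerivAt_fst)
  have hphi2 : HasFDerivAt (fun y : ℝ × ℝ × ℝ => deriv (deriv f) y.1)
      ((ContinuousLinearMap.smulRight (1 : ℝ →L[ℝ] ℝ) (deriv (deriv (deriv f)) x.1)).comp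
        (ContinuousLinearMap.fst ℝ ℝ (ℝ × ℝ))) x :=
    h3.hasFDerivAt.comp x (hasFDerivAt_fst)
  have hlog : HasDerivAt (fun t => Real.log (deriv f t)) (deriv (deriv f) x.1 / a) x.1 :=
    h2.log ha
  have hc1 : HasFDerivAt (fun y : ℝ × ℝ × ℝ => y.2.1 + Real.log (deriv f y.1)) _ x :=
    (hasFDerivAt_snd.fst).add (hlog.hasFDerivAt.comp x hasFDerivAt_fst)
  have hsq : HasFDerivAt (fun y : ℝ × ℝ × ℝ => (deriv f y.1) ^ 2) _ x :=
    ((h2.pow 2).hasFDerivAt.comp x hasFDerivAt_fst)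
  have hinv1 : HasFDerivAt (fun y : ℝ × ℝ × ℝ => (deriv f y.1)⁻¹) _ x :=
    ((h2.inv ha).hasFDerivAt.comp x hasFDerivAt_fst)
  have hinv2 : HasFDerivAt (fun y : ℝ × ℝ × ℝ => ((deriv f y.1) ^ 2)⁻¹) _ x :=
    (((h2.pow 2).inv (pow_ne_zero 2 ha)).hasFDerivAt.comp x hasFDerivAt_fst)
  have hc2a : HasFDerivAt (fun y : ℝ × ℝ × ℝ => y.2.2 * (deriv f y.1)⁻¹) _ x :=
    (hasFDerivAt_snd.snd).mul hinv1
  have hc2b : HasFDerivAt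
      (fun y : ℝ × ℝ × ℝ => deriv (deriv f) y.1 * ((deriv f y.1) ^ 2)⁻¹) _ x :=
    hphi2.mul hinv2
  have hder : HasFDerivAt (fun y : ℝ × ℝ × ℝ =>
      (f y.1, y.2.1 + Real.log (deriv f y.1),
        y.2.2 * (deriv f y.1)⁻¹ + deriv (deriv f) y.1 * ((deriv f y.1) ^ 2)⁻¹)) _ x :=
    HasFDerivAt.prodMk hc0 (HasFDerivAt.prodMk hc1 (HasFDerivAt.add hc2a hc2b))
  rw [hder.fderiv]
  rw [neg_inj, and_self]
  simp only [vol3, Matrix.det_fin_three, ContinuousLinearMap.prod_apply,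
      ContinuousLinearMap.add_apply, ContinuousLinearMap.comp_apply,
      ContinuousLinearMap.smulRight_apply, ContinuousLinearMap.coe_fst',
      ContinuousLinearMap.coe_snd', ContinuousLinearMap.one_apply,
      ContinuousLinearMap.smul_apply, ContinuousLinearMap.sub_apply,
      Matrix.cons_val', Matrix.cons_val_zero, Matrix.cons_val_one, Matrix.head_cons,
      Matrix.empty_val', Matrix.cons_val_fin_one, Matrix.head_fin_const,
      smul_eq_mul, ContinuousLinearMap.toSpanSingleton_apply,
      Matrix.of_apply, Matrix.cons_val_two, Matrix.tail_cons, Pi.pow_apply]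
  simp only [← ha_def]
  field_simp
  ring
end

section
/- Let α > 0 with α ∉ ℕ, write α = n + β with n ∈ ℤ≥0 and 0 < β < 1. Suppose A, C : ℝ₊³ → ℝ are smooth (ℝ₊³ = {(x₀,x₁,x₂) : x₀ ≥ 0}) and satisfy for all x₀ ≥ 0: x₀^{3α+3} ∂C/∂x₀ + α x₀^{2α+2} ∂C/∂x₁ + (−α x₂ x₀^{α+1} − α(α+1) x₀^α + α²) x₀^{α+1} ∂C/∂x₂ = (α³ − 3α²(α+1)x₀^α + α(α+1)(α+2)x₀^{2α} − α²x₂x₀^{α+1} + α(α+1)x₂x₀^{2α+1}) A − α x₀^{2α+2} C. Then A(0,x₁,x₂) = 0 for all x₁, x₂, and moreover A(x₀,x₁,x₂) = x₀^{n+2} Ã(x₀,x₁,x₂) for some smooth function Ã, and ∂C/∂x₂(0,x₁,x₂) = 0. -/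
open Real

/-- Partial derivative in `x₀`. -/
noncomputable def pd0 (F : ℝ × ℝ × ℝ → ℝ) (x : ℝ × ℝ × ℝ) : ℝ :=
  deriv (fun t => F (t, x.2.1, x.2.2)) x.1

/-- Partial derivative in `x₁`. -/
noncomputable def pd1 (F : ℝ × ℝ × ℝ → ℝ) (x : ℝ × ℝ × ℝ) : ℝ :=
  deriv (fun t => F (x.1, t, x.2.2)) x.2.1

/-- Partial derivative in `x₂`. -/
noncomputable def pd2 (F : ℝ × ℝ × ℝ → ℝ) (x : ℝ × ℝ × ℝ) : ℝ :=
  deriv (fun t => F (x.1, x.2.1, t)) x.2.2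

open Real Filter MeasureTheory Set

noncomputable section StmtAux

/-- scaling of the first coordinate -/
noncomputable def Smap (t : ℝ) : (ℝ × ℝ × ℝ) →L[ℝ] (ℝ × ℝ × ℝ) :=
  (t • ContinuousLinearMap.fst ℝ ℝ (ℝ × ℝ)).prod (ContinuousLinearMap.snd ℝ ℝ (ℝ × ℝ))

lemma Smap_apply (t : ℝ) (v : ℝ × ℝ × ℝ) : Smap t v = (t * v.1, v.2) := rfl

lemma Smap_one (v : ℝ × ℝ × ℝ) : Smap 1 v = v := by
  rw [Smap_apply, one_mul]

lemma Smap_cont {v : ℝ × ℝ × ℝ} : Continuous fun t => Smap t v := by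
  simp only [Smap_apply]
  exact (continuous_id.mul continuous_const).prodMk continuous_const

end StmtAux


section StmtAux2

open Real Filter MeasureTheory Set Topology
open scoped NNReal ENNReal

lemma smooth_div (F : ℝ × ℝ × ℝ → ℝ) (hF : ContDiff ℝ (⊤ : ℕ∞) F)
    (hb : ∀ y z : ℝ, F (0, y, z) = 0) :
    ∃ G : ℝ × ℝ × ℝ → ℝ, ContDiff ℝ (⊤ : ℕ∞) G ∧ ∀ x, F x = x.1 * G x := by
  classical
  set D : ℝ × ℝ × ℝ → ℝ := fun x => fderiv ℝ F x ((1:ℝ), (0:ℝ), (0:ℝ)) with hDdef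
  have hDs : ContDiff ℝ (⊤ : ℕ∞) D := by
    have h1 : ContDiff ℝ (⊤ : ℕ∞) (fderiv ℝ F) := hF.fderiv_right (m := (⊤ : ℕ∞)) (by simp)
    exact h1.clm_apply contDiff_const
  let χ : ContDiffBump (-(1/2:ℝ)) := ⟨1, 2, by norm_num, by norm_num⟩
  set g : ℝ × ℝ × ℝ → ℝ → ℝ := fun p u => χ u * D (Smap (-u) p) with hgdef
  set f : ℝ → ℝ := (Set.Icc (0:ℝ) 1).indicator (fun _ => 1) with hfdef
  refine ⟨fun x => (convolution f (g x) (ContinuousLinearMap.lsmul ℝ ℝ) MeasureTheory.volume) 0, ?_, ?_⟩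
  · have h := contDiffOn_convolution_right_with_param_comp (μ := MeasureTheory.volume) (n := ⊤)
      (ContinuousLinearMap.lsmul ℝ ℝ) (s := Set.univ) (v := fun _ : ℝ × ℝ × ℝ => (0:ℝ))
      contDiffOn_const (f := f) (g := g) (k := Metric.closedBall (-(1/2:ℝ)) 2) isOpen_univ
      (isCompact_closedBall _ _) ?_ ?_ ?_
    · exact contDiffOn_univ.1 h
    · intro p u _ hu
      simp only [hgdef]
      rw [χ.zero_of_le_dist, zero_mul]
      simp only [Metric.mem_closedBall, not_le] at hu
      exact hu.le
    · exact ((MeasureTheory.integrableOn_const (by simp)).integrable_indicator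
        measurableSet_Icc).locallyIntegrable
    · have hS : ContDiff ℝ (⊤ : ℕ∞) (fun q : (ℝ × ℝ × ℝ) × ℝ => Smap (-q.2) q.1) := by
        simp only [Smap_apply]
        fun_prop
      exact ((χ.contDiff.comp contDiff_snd).mul (hDs.comp hS)).contDiffOn
  · intro x
    show F x = x.1 * (convolution f (g x) (ContinuousLinearMap.lsmul ℝ ℝ) MeasureTheory.volume) 0
    rw [convolution_def]
    have hfun : (fun t => (ContinuousLinearMap.lsmul ℝ ℝ) (f t) (g x (0 - t)))
        = (Set.Icc (0:ℝ) 1).indicator (fun t => D (Smap t x)) := by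
      funext t
      by_cases ht : t ∈ Set.Icc (0:ℝ) 1
      · have h1 : χ (-t) = 1 := by
          apply χ.one_of_mem_closedBall
          rw [Metric.mem_closedBall, Real.dist_eq, abs_le]
          change -(1:ℝ) ≤ -t - -(1/2) ∧ -t - -(1/2) ≤ 1
          constructor <;> linarith [ht.1, ht.2]
        simp only [hfdef, hgdef, Set.indicator_of_mem ht, ContinuousLinearMap.lsmul_apply,
          h1, one_mul, smul_eq_mul, zero_sub, neg_neg]
      · simp [hfdef, Set.indicator_of_notMem ht]
    rw [hfun, MeasureTheory.integral_indicator measurableSet_Icc,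
      MeasureTheory.integral_Icc_eq_integral_Ioc, ← intervalIntegral.integral_of_le zero_le_one,
      ← intervalIntegral.integral_const_mul]
    have hFdiff : Differentiable ℝ F := hF.differentiable (by simp)
    have hderiv : ∀ t ∈ Set.uIcc (0:ℝ) 1,
        HasDerivAt (fun s => F (Smap s x)) (x.1 * D (Smap t x)) t := by
      intro t _
      have h1 : HasDerivAt (fun s : ℝ => Smap s x) ((x.1, (0:ℝ), (0:ℝ))) t := by
        simp only [Smap_apply]
        exact (hasDerivAt_mul_const x.1).prodMk (hasDerivAt_const t x.2)
      have h2 := (hFdiff (Smap t x)).hasFDerivAt.comp_hasDerivAt t h1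
      have h4 : (fderiv ℝ F (Smap t x)) ((x.1:ℝ), (0:ℝ), (0:ℝ))
          = x.1 * D (Smap t x) := by
        have h5 := (fderiv ℝ F (Smap t x)).map_smul x.1 ((1:ℝ), (0:ℝ), (0:ℝ))
        simp only [Prod.smul_mk, smul_eq_mul, mul_one, mul_zero] at h5
        exact h5
      rw [← h4]
      exact h2
    rw [intervalIntegral.integral_eq_sub_of_hasDerivAt hderiv
      (Continuous.intervalIntegrable (continuous_const.mul
        (hDs.continuous.comp Smap_cont)) _ _), Smap_one]
    have h0 : Smap 0 x = ((0:ℝ), x.2.1, x.2.2) := by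
      rw [Smap_apply, zero_mul]
    rw [h0, hb, sub_zero]

end StmtAux2

section StmtMain

open Real Filter MeasureTheory Set Topology
open scoped NNReal ENNReal

lemma pd0_eq (F : ℝ × ℝ × ℝ → ℝ) (hF : Differentiable ℝ F) (x : ℝ × ℝ × ℝ) :
    pd0 F x = fderiv ℝ F x (1, 0, 0) := by
  have h1 : HasDerivAt (fun t : ℝ => ((t, x.2.1, x.2.2) : ℝ × ℝ × ℝ))
      ((1:ℝ), (0:ℝ), (0:ℝ)) x.1 :=
    (hasDerivAt_id x.1).prodMk (hasDerivAt_const x.1 (x.2.1, x.2.2))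
  have h2 := (hF (x.1, x.2.1, x.2.2)).hasFDerivAt.comp_hasDerivAt x.1 h1
  exact h2.deriv

lemma pd1_eq (F : ℝ × ℝ × ℝ → ℝ) (hF : Differentiable ℝ F) (x : ℝ × ℝ × ℝ) :
    pd1 F x = fderiv ℝ F x (0, 1, 0) := by
  have h1 : HasDerivAt (fun t : ℝ => ((x.1, t, x.2.2) : ℝ × ℝ × ℝ))
      ((0:ℝ), (1:ℝ), (0:ℝ)) x.2.1 :=
    (hasDerivAt_const x.2.1 x.1).prodMk ((hasDerivAt_id x.2.1).prodMk (hasDerivAt_const x.2.1 x.2.2))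
  have h2 := (hF (x.1, x.2.1, x.2.2)).hasFDerivAt.comp_hasDerivAt x.2.1 h1
  exact h2.deriv

lemma pd2_eq (F : ℝ × ℝ × ℝ → ℝ) (hF : Differentiable ℝ F) (x : ℝ × ℝ × ℝ) :
    pd2 F x = fderiv ℝ F x (0, 0, 1) := by
  have h1 : HasDerivAt (fun t : ℝ => ((x.1, x.2.1, t) : ℝ × ℝ × ℝ))
      ((0:ℝ), (0:ℝ), (1:ℝ)) x.2.2 :=
    (hasDerivAt_const x.2.2 x.1).prodMk ((hasDerivAt_const x.2.2 x.2.1).prodMk (hasDerivAt_id x.2.2))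
  have h2 := (hF (x.1, x.2.1, x.2.2)).hasFDerivAt.comp_hasDerivAt x.2.2 h1
  exact h2.deriv

/-- "Ψ": the PDE divided by `x₀^(α+1)`. -/
noncomputable def PsiFun (α : ℝ) (C : ℝ × ℝ × ℝ → ℝ) : ℝ × ℝ × ℝ → ℝ := fun x =>
  x.1 ^ (2*α+2) * pd0 C x + α * x.1 ^ (α+1) * pd1 C x
    + (-α * x.2.2 * x.1 ^ (α+1) - α * (α+1) * x.1 ^ α + α ^ 2) * pd2 C x
    + α * x.1 ^ (α+1) * C x

/-- "G": the non-constant part of the coefficient of `A`, divided by `x₀^α`. -/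
noncomputable def GcFun (α : ℝ) : ℝ × ℝ × ℝ → ℝ := fun x =>
  -(3*α^2*(α+1)) + α*(α+1)*(α+2) * x.1 ^ α - α^2 * x.2.2 * x.1
    + α*(α+1) * x.2.2 * x.1 ^ (α+1)

lemma cont_rpow_fst (c : ℝ) (hc : 0 ≤ c) : Continuous fun x : ℝ × ℝ × ℝ => x.1 ^ c := by
  exact (continuous_iff_continuousAt.2 fun s =>
    Real.continuousAt_rpow_const s c (Or.inr hc)).comp continuous_fst

lemma tendsto_rpow_zero (c : ℝ) (hc : 0 < c) :
    Tendsto (fun t : ℝ => t ^ c) (𝓝[>] 0) (𝓝 0) := by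
  have h := (Real.continuousAt_rpow_const 0 c (Or.inr hc.le)).tendsto
  rw [Real.zero_rpow hc.ne'] at h
  exact h.mono_left nhdsWithin_le_nhds

end StmtMain


section StmtFinal
open Real Filter MeasureTheory Set Topology

/-- let `α = n + β`, `n ∈ ℤ≥0`, `0 < β < 1` (so `α ∉ ℕ`).  If smooth
functions `A, C` on `ℝ₊³` (i.e. restrictions of smooth functions on `ℝ³`) satisfy the
PDE (4.16c) for all `x₀ ≥ 0`, then `A` vanishes on `{x₀ = 0}`, `A = x₀^{n+2} Ã` for a
smooth `Ã`, and `∂C/∂x₂` vanishes on `{x₀ = 0}`. -/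
theorem stmt8 (α β : ℝ) (n : ℕ) (hα : 0 < α) (hnat : ¬∃ m : ℕ, α = m)
    (hnβ : α = n + β) (hβ0 : 0 < β) (hβ1 : β < 1)
    (A C : ℝ × ℝ × ℝ → ℝ)
    (hA : ContDiff ℝ (⊤ : ℕ∞) A) (hC : ContDiff ℝ (⊤ : ℕ∞) C)
    (hPDE : ∀ x : ℝ × ℝ × ℝ, 0 ≤ x.1 →
      x.1 ^ (3 * α + 3) * pd0 C x + α * x.1 ^ (2 * α + 2) * pd1 C x
          + (-α * x.2.2 * x.1 ^ (α + 1) - α * (α + 1) * x.1 ^ α + α ^ 2)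
              * x.1 ^ (α + 1) * pd2 C x
        = (α ^ 3 - 3 * α ^ 2 * (α + 1) * x.1 ^ α
              + α * (α + 1) * (α + 2) * x.1 ^ (2 * α)
              - α ^ 2 * x.2.2 * x.1 ^ (α + 1)
              + α * (α + 1) * x.2.2 * x.1 ^ (2 * α + 1)) * A x
            - α * x.1 ^ (2 * α + 2) * C x) :
    (∀ x₁ x₂ : ℝ, A (0, x₁, x₂) = 0) ∧
    (∃ Atil : ℝ × ℝ × ℝ → ℝ, ContDiff ℝ (⊤ : ℕ∞) Atil ∧
      ∀ x : ℝ × ℝ × ℝ, 0 ≤ x.1 → A x = x.1 ^ (n + 2) * Atil x) ∧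
    (∀ x₁ x₂ : ℝ, pd2 C (0, x₁, x₂) = 0) := by
  have hα3 : (0:ℝ) < α ^ 3 := by positivity
  have hAa : ContDiff ℝ (⊤ : ℕ∞) A := hA
  have hCa : ContDiff ℝ (⊤ : ℕ∞) C := hC
  have hAc : Continuous A := hA.continuous
  have hCc : Continuous C := hC.continuous
  have hCdiff : Differentiable ℝ C := hC.differentiable (by simp)
  -- continuity of the partial derivatives of C
  have hfdC : Continuous (fderiv ℝ C) := (hC.of_le (by simp) : ContDiff ℝ 1 C).continuous_fderiv one_ne_zero
  have hpd0 : Continuous (pd0 C) :=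
    (hfdC.clm_apply continuous_const).congr fun x => (pd0_eq C hCdiff x).symm
  have hpd1 : Continuous (pd1 C) :=
    (hfdC.clm_apply continuous_const).congr fun x => (pd1_eq C hCdiff x).symm
  have hpd2 : Continuous (pd2 C) :=
    (hfdC.clm_apply continuous_const).congr fun x => (pd2_eq C hCdiff x).symm
  have hΨc : Continuous (PsiFun α C) := by
    unfold PsiFun
    refine ((((cont_rpow_fst _ (by positivity)).mul hpd0).add
      ((continuous_const.mul (cont_rpow_fst _ (by positivity))).mul hpd1)).add
      (Continuous.mul ?_ hpd2)).add
      ((continuous_const.mul (cont_rpow_fst _ (by positivity))).mul hCc)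
    refine Continuous.add (Continuous.sub ?_ ?_) continuous_const
    · exact (continuous_const.mul (continuous_snd.comp continuous_snd)).mul
        (cont_rpow_fst _ (by positivity))
    · exact continuous_const.mul (cont_rpow_fst _ hα.le)
  have hGc : Continuous (GcFun α) := by
    unfold GcFun
    refine ((continuous_const.add
      (continuous_const.mul (cont_rpow_fst _ hα.le))).sub
      ((continuous_const.mul (continuous_snd.comp continuous_snd)).mul continuous_fst)).add
      ((continuous_const.mul (continuous_snd.comp continuous_snd)).mul
        (cont_rpow_fst _ (by positivity)))
  -- Conclusion 1
  have hA0 : ∀ x₁ x₂ : ℝ, A (0, x₁, x₂) = 0 := by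
    intro y z
    have h := hPDE (0, y, z) le_rfl
    dsimp only at h
    rw [Real.zero_rpow (by positivity : 3*α+3 ≠ 0), Real.zero_rpow (by positivity : 2*α+2 ≠ 0),
      Real.zero_rpow (by positivity : α+1 ≠ 0), Real.zero_rpow hα.ne',
      Real.zero_rpow (by positivity : 2*α ≠ 0), Real.zero_rpow (by positivity : 2*α+1 ≠ 0)] at h
    have h2 : α^3 * A (0, y, z) = 0 := by linarith
    have := mul_eq_zero.mp h2
    rcases this with h3 | h3
    · exact absurd h3 (by positivity)
    · exact h3
  -- the key identity
  have keyid : ∀ x : ℝ × ℝ × ℝ, 0 < x.1 →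
      α^3 * A x = x.1 ^ α * (x.1 * PsiFun α C x - GcFun α x * A x) := by
    intro x hx
    have h := hPDE x hx.le
    have e5 : x.1 ^ (α+1) = x.1 ^ α * x.1 := by rw [Real.rpow_add hx, Real.rpow_one]
    have e2 : x.1 ^ (2*α+2) = x.1^α * x.1^α * (x.1 * x.1) := by
      rw [show 2*α+2 = (α+1)+(α+1) by ring, Real.rpow_add hx, e5]; ring
    have e1 : x.1 ^ (3*α+3) = x.1^α * x.1^α * x.1^α * (x.1*x.1*x.1) := by
      rw [show 3*α+3 = (2*α+2)+(α+1) by ring, Real.rpow_add hx, e2, e5]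
      ring
    have e3 : x.1 ^ (2*α) = x.1^α * x.1^α := by rw [show 2*α = α + α by ring, Real.rpow_add hx]
    have e4 : x.1 ^ (2*α+1) = x.1^α*x.1^α*x.1 := by
      rw [show 2*α+1 = α+(α+1) by ring, Real.rpow_add hx, e5]; ring
    rw [e1, e2, e3, e4, e5] at h
    unfold PsiFun GcFun
    rw [e2, e5]
    linear_combination -h
  -- a bound "helper"
  have bdd : ∀ f : ℝ × ℝ × ℝ → ℝ, Continuous f → ∀ y z : ℝ,
      ∃ K, 0 ≤ K ∧ ∀ t ∈ Icc (0:ℝ) 1, |f (t, y, z)| ≤ K := by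
    intro f hf y z
    obtain ⟨K, hK⟩ := (isCompact_Icc (a := (0:ℝ)) (b := 1)).exists_bound_of_continuousOn
      ((hf.comp (continuous_id.prodMk continuous_const)).continuousOn)
    refine ⟨max K 0, le_max_right _ _, fun t ht => ?_⟩
    exact le_trans (by simpa using hK t ht) (le_max_left _ _)
  -- the bootstrap bound
  have boundA : ∀ y z : ℝ, ∃ M, 0 ≤ M ∧
      ∀ t ∈ Ioc (0:ℝ) 1, |A (t, y, z)| ≤ M * t ^ (α+1) := by
    intro y z
    obtain ⟨KΨ, hKΨ0, hKΨ⟩ := bdd (PsiFun α C) hΨc y z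
    obtain ⟨KG, hKG0, hKG⟩ := bdd (GcFun α) hGc y z
    obtain ⟨KA, hKA0, hKA⟩ := bdd A hAc y z
    have step : ∀ c M : ℝ, 0 ≤ c → 0 ≤ M →
        (∀ t ∈ Ioc (0:ℝ) 1, |A (t, y, z)| ≤ M * t ^ c) →
        ∀ t ∈ Ioc (0:ℝ) 1,
          |A (t, y, z)| ≤ ((KΨ + KG*M)/α^3) * t ^ (min (α+1) (α + c)) := by
      intro c M hc hM hIH t ht
      have ht0 : 0 < t := ht.1
      have htα : (0:ℝ) < t ^ α := Real.rpow_pos_of_pos ht0 α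
      have hkey := keyid (t, y, z) ht0
      dsimp only at hkey
      have h1 : α^3 * |A (t, y, z)| ≤ t^α * (t * KΨ + KG * (M * t ^ c)) := by
        have habs : α^3 * |A (t, y, z)| = |α^3 * A (t, y, z)| := by
          rw [abs_mul, abs_of_pos hα3]
        rw [habs, hkey, abs_mul, abs_of_pos htα]
        refine mul_le_mul_of_nonneg_left ?_ htα.le
        have htri : |t * PsiFun α C (t,y,z) - GcFun α (t,y,z) * A (t,y,z)|
            ≤ |t * PsiFun α C (t,y,z)| + |GcFun α (t,y,z) * A (t,y,z)| := abs_sub _ _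
        refine le_trans htri (add_le_add ?_ ?_)
        · rw [abs_mul, abs_of_pos ht0]
          exact mul_le_mul_of_nonneg_left (hKΨ t (Ioc_subset_Icc_self ht)) ht0.le
        · rw [abs_mul]
          exact mul_le_mul (hKG t (Ioc_subset_Icc_self ht)) (hIH t ht) (abs_nonneg _) hKG0
      have h2 : t^α * (t * KΨ + KG * (M * t ^ c))
          ≤ (KΨ + KG*M) * t ^ (min (α+1) (α + c)) := by
        have ha1 : t^α * t = t ^ (α+1) := by rw [Real.rpow_add ht0, Real.rpow_one]
        have ha2 : t^α * t^c = t ^ (α+c) := (Real.rpow_add ht0 α c).symm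
        have hb1 : t ^ (α+1) ≤ t ^ (min (α+1) (α+c)) :=
          Real.rpow_le_rpow_of_exponent_ge ht0 ht.2 (min_le_left _ _)
        have hb2 : t ^ (α+c) ≤ t ^ (min (α+1) (α+c)) :=
          Real.rpow_le_rpow_of_exponent_ge ht0 ht.2 (min_le_right _ _)
        calc t^α * (t * KΨ + KG * (M * t ^ c))
            = KΨ * (t^α * t) + KG * M * (t^α * t^c) := by ring
          _ = KΨ * t^(α+1) + KG * M * t^(α+c) := by rw [ha1, ha2]
          _ ≤ KΨ * t^(min (α+1) (α+c)) + KG * M * t^(min (α+1) (α+c)) := by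
              have hKGM : 0 ≤ KG * M := mul_nonneg hKG0 hM
              exact add_le_add (mul_le_mul_of_nonneg_left hb1 hKΨ0)
                (mul_le_mul_of_nonneg_left hb2 hKGM)
          _ = (KΨ + KG*M) * t ^ (min (α+1) (α + c)) := by ring
      have h3 := le_trans h1 h2
      rw [div_mul_eq_mul_div, le_div_iff₀ hα3]
      linarith
    have iter : ∀ k : ℕ, ∃ M, 0 ≤ M ∧ ∀ t ∈ Ioc (0:ℝ) 1,
        |A (t, y, z)| ≤ M * t ^ (min (α+1) (((k:ℝ)+1)*α)) := by
      intro k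
      induction k with
      | zero =>
        refine ⟨(KΨ + KG*KA)/α^3, by positivity, ?_⟩
        have h0 : ∀ t ∈ Ioc (0:ℝ) 1, |A (t, y, z)| ≤ KA * t ^ (0:ℝ) := by
          intro t ht
          rw [Real.rpow_zero, mul_one]
          exact hKA t (Ioc_subset_Icc_self ht)
        intro t ht
        have h1 := step 0 KA le_rfl hKA0 h0 t ht
        rw [show α + 0 = α by ring] at h1
        rw [show ((0:ℕ):ℝ)+1 = 1 by norm_num, one_mul]
        exact h1
      | succ k ih =>
        obtain ⟨M, hM0, hM⟩ := ih
        refine ⟨(KΨ + KG*M)/α^3, by positivity, ?_⟩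
        intro t ht
        have h1 := step (min (α+1) (((k:ℝ)+1)*α)) M (by positivity) hM0 hM t ht
        refine le_trans h1 (mul_le_mul_of_nonneg_left ?_ (by positivity))
        apply Real.rpow_le_rpow_of_exponent_ge ht.1 ht.2
        rcases le_total (((k:ℝ)+1)*α) (α+1) with h | h
        · rw [min_eq_right h]
          push_cast
          rw [show α + ((k:ℝ)+1)*α = ((k:ℝ)+1+1)*α by ring]
        · rw [min_eq_left h]
          refine le_trans (min_le_left _ _) ?_
          exact le_min (by linarith) (by linarith)
    obtain ⟨M, hM0, hM⟩ := iter ⌈1/α⌉₊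
    refine ⟨M, hM0, ?_⟩
    have hge : α + 1 ≤ (((⌈1/α⌉₊:ℕ):ℝ)+1)*α := by
      have h1 : 1/α ≤ ((⌈1/α⌉₊:ℕ):ℝ) := Nat.le_ceil _
      have h2 := mul_le_mul_of_nonneg_right h1 hα.le
      rw [div_mul_cancel₀ 1 hα.ne'] at h2
      nlinarith
    intro t ht
    have h := hM t ht
    rwa [min_eq_left hge] at h
  -- iterated Hadamard division
  have hHad : ∀ j : ℕ, j ≤ n + 2 →
      ∃ B : ℝ × ℝ × ℝ → ℝ, ContDiff ℝ (⊤ : ℕ∞) B ∧ ∀ x, A x = x.1 ^ j * B x := by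
    intro j
    induction j with
    | zero => exact fun _ => ⟨A, hAa, fun x => by simp⟩
    | succ j ih =>
      intro hj
      obtain ⟨B, hB, hAB⟩ := ih (by omega)
      have hBcont : Continuous B := by
        rw [continuous_iff_continuousAt]
        exact fun x => hB.continuous.continuousAt
      have hjn : (j:ℝ) ≤ (n:ℝ) + 1 := by
        have : j ≤ n + 1 := by omega
        exact_mod_cast this
      have hexp : 0 < α + 1 - (j:ℝ) := by
        rw [hnβ]; linarith
      have hB0 : ∀ y z : ℝ, B (0, y, z) = 0 := by
        intro y z
        obtain ⟨M, hM0, hM⟩ := boundA y z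
        have hbB : ∀ t ∈ Ioc (0:ℝ) 1, |B (t, y, z)| ≤ M * t ^ (α+1-(j:ℝ)) := by
          intro t ht
          have ht0 : 0 < t := ht.1
          have htj : (0:ℝ) < t ^ (j:ℕ) := pow_pos ht0 j
          have hAB' := hAB (t, y, z)
          dsimp only at hAB'
          have h1 : |A (t, y, z)| = t ^ (j:ℕ) * |B (t, y, z)| := by
            rw [hAB', abs_mul, abs_of_pos htj]
          have h2 := hM t ht
          rw [h1] at h2
          have h3 : |B (t, y, z)| ≤ M * t ^ (α+1) / t ^ (j:ℕ) := by
            rw [le_div_iff₀ htj]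
            linarith
          refine le_trans h3 (le_of_eq ?_)
          rw [← Real.rpow_natCast t j, Real.rpow_sub ht0, mul_div_assoc]
        have h1 : Tendsto (fun t => B (t, y, z)) (𝓝[>] (0:ℝ)) (𝓝 (B (0, y, z))) :=
          ((hBcont.comp (continuous_id.prodMk continuous_const)).tendsto 0).mono_left
            nhdsWithin_le_nhds
        have h2 : Tendsto (fun t => B (t, y, z)) (𝓝[>] (0:ℝ)) (𝓝 0) := by
          apply squeeze_zero_norm' (a := fun t => M * t ^ (α+1-(j:ℝ)))
          · filter_upwards [Ioc_mem_nhdsGT (zero_lt_one (α := ℝ))] with t ht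
            simpa [Real.norm_eq_abs] using hbB t ht
          · have := (tendsto_rpow_zero _ hexp).const_mul M
            simpa using this
        exact tendsto_nhds_unique h1 h2
      obtain ⟨G, hG, hBG⟩ := smooth_div B hB hB0
      refine ⟨G, hG, fun x => ?_⟩
      rw [hAB x, hBG x, pow_succ]
      ring
  obtain ⟨Atil, hAtilA, hAtilid⟩ := hHad (n+2) le_rfl
  have hAtilc : Continuous Atil := by
    rw [continuous_iff_continuousAt]
    exact fun x => hAtilA.continuous.continuousAt
  refine ⟨hA0, ⟨Atil, hAtilA, fun x _ => hAtilid x⟩, ?_⟩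
  -- conclusion 3
  intro y z
  set b := pd2 C (0, y, z) with hbdef
  set f : ℝ → ℝ := fun t =>
    PsiFun α C (t,y,z) - GcFun α (t,y,z) * (t^(n+1) * Atil (t,y,z)) with hfdef
  have hcomp : ∀ g : ℝ × ℝ × ℝ → ℝ, Continuous g →
      Tendsto (fun t => g (t, y, z)) (𝓝[>] (0:ℝ)) (𝓝 (g (0, y, z))) := by
    intro g hg
    exact ((hg.comp (continuous_id.prodMk continuous_const)).tendsto 0).mono_left
      nhdsWithin_le_nhds
  have hT1 : Tendsto f (𝓝[>] (0:ℝ)) (𝓝 (α^2 * b)) := by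
    have hΨ0 : PsiFun α C (0, y, z) = α^2 * b := by
      unfold PsiFun
      dsimp only
      rw [Real.zero_rpow (by positivity : 2*α+2 ≠ 0),
        Real.zero_rpow (by positivity : α+1 ≠ 0), Real.zero_rpow hα.ne']
      rw [hbdef]
      ring
    have h1 := hcomp (PsiFun α C) hΨc
    have h2 := hcomp (GcFun α) hGc
    have h3 := hcomp Atil hAtilc
    have h4 : Tendsto (fun t : ℝ => t ^ (n+1)) (𝓝[>] (0:ℝ)) (𝓝 0) := by
      have := ((continuous_pow (n+1)).tendsto (0:ℝ)).mono_left
        (nhdsWithin_le_nhds (s := Ioi (0:ℝ)))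
      rwa [zero_pow (Nat.succ_ne_zero n)] at this
    have h5 := h1.sub (h2.mul (h4.mul h3))
    rw [hΨ0, zero_mul, mul_zero, sub_zero] at h5
    exact h5
  have hT2 : Tendsto f (𝓝[>] (0:ℝ)) (𝓝 0) := by
    have hev : ∀ᶠ t in 𝓝[>] (0:ℝ),
        α^3 * (t ^ ((1:ℝ)-β) * Atil (t,y,z)) = f t := by
      filter_upwards [self_mem_nhdsWithin] with t ht
      have ht0 : (0:ℝ) < t := ht
      have hkey := keyid (t, y, z) ht0
      dsimp only at hkey
      have hAt := hAtilid (t, y, z)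
      dsimp only at hAt
      have hΦ : t * PsiFun α C (t,y,z) - GcFun α (t,y,z) * A (t,y,z) = t * f t := by
        rw [hAt, hfdef]
        ring
      rw [hΦ] at hkey
      have hsplit : t ^ ((n:ℝ)+2) = t^(α+1) * t^((1:ℝ)-β) := by
        rw [← Real.rpow_add ht0]
        congr 1
        rw [hnβ]; ring
      have htn2 : (t:ℝ)^((n:ℕ)+2) = t ^ ((n:ℝ)+2) := by
        rw [← Real.rpow_natCast t (n+2)]
        norm_num
      have hta : t^α * (t * f t) = t^(α+1) * f t := by
        rw [Real.rpow_add ht0, Real.rpow_one]; ring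
      rw [hta, hAt, htn2, hsplit] at hkey
      have htα1 : t ^ (α+1) ≠ 0 := (Real.rpow_pos_of_pos ht0 _).ne'
      apply mul_left_cancel₀ htα1
      linear_combination hkey
    have h1 : Tendsto (fun t : ℝ => α^3 * (t ^ ((1:ℝ)-β) * Atil (t,y,z)))
        (𝓝[>] (0:ℝ)) (𝓝 0) := by
      have h2 := (tendsto_rpow_zero _ (by linarith : (0:ℝ) < 1-β)).mul
        (hcomp Atil hAtilc)
      rw [zero_mul] at h2
      have := h2.const_mul (α^3)
      simpa using this
    exact h1.congr' hev
  have huniq := tendsto_nhds_unique hT1 hT2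
  have hb0 : b = 0 := by
    have hα2 : (0:ℝ) < α^2 := by positivity
    rcases mul_eq_zero.mp huniq with h | h
    · exact absurd h hα2.ne'
    · exact h
  exact hb0

end StmtFinal
end

section
/- Let V : ℝ → ℝ be smooth with V(x₀) ≠ 0 for all x₀ > 0. Define u₁ = x₁ − ln|V(x₀)| and u₂ = −x₂ V(x₀) + V'(x₀). For any smooth Φ, Ψ : U → ℝ on an open U ⊆ ℝ², the functions A = −V·Φ(u₁,u₂), B = u₁ − (∂Ψ/∂u₂)(u₁,u₂) − V'·Φ(u₁,u₂), C = −(1/V)(∂Ψ/∂u₁)(u₁,u₂) + (x₂V' − V'')·Φ(u₁,u₂), defined on w⁻¹(U) where w(x₀,x₁,x₂) = (u₁,u₂), satisfy the divergence equation ∂A/∂x₀ + ∂B/∂x₁ + ∂C/∂x₂ = 1 and all three invariance PDEs V ∂A/∂x₀ + V' ∂A/∂x₁ + (−x₂V'+V'') ∂A/∂x₂ = V'A, V ∂B/∂x₀ + V' ∂B/∂x₁ + (−x₂V'+V'') ∂B/∂x₂ = V''A, and V ∂C/∂x₀ + V' ∂C/∂x₁ + (−x₂V'+V'') ∂C/∂x₂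 = (−x₂V''+V''')A − V'C on {x₀ > 0} ∩ w⁻¹(U). -/
open Real

lemma clm_decomp {F : Type*} [NormedAddCommGroup F] [NormedSpace ℝ F]
    (L : ℝ × ℝ →L[ℝ] F) (d : ℝ × ℝ) :
    L d = d.1 • L (1, 0) + d.2 • L (0, 1) := by
  have h : L d = L (d.1 • ((1:ℝ), (0:ℝ)) + d.2 • ((0:ℝ), (1:ℝ))) := by
    congr 1
    simp [Prod.ext_iff]
  rw [h, map_add, map_smul, map_smul]

lemma hasDerivAt_comp2 {g : ℝ × ℝ → ℝ} {γ : ℝ → ℝ × ℝ} {d : ℝ × ℝ} {t : ℝ}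
    (hg : DifferentiableAt ℝ g (γ t)) (hγ : HasDerivAt γ d t) :
    HasDerivAt (fun s => g (γ s)) (fderiv ℝ g (γ t) d) t :=
  hg.hasFDerivAt.comp_hasDerivAt t hγ

lemma deriv_slice1 {g : ℝ × ℝ → ℝ} {q1 q2 : ℝ} (hg : DifferentiableAt ℝ g (q1, q2)) :
    deriv (fun s => g (s, q2)) q1 = fderiv ℝ g (q1, q2) ((1:ℝ), (0:ℝ)) := by
  have h : HasDerivAt (fun s : ℝ => ((s : ℝ), q2)) (((1:ℝ), (0:ℝ)) : ℝ × ℝ) q1 :=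
    (hasDerivAt_id _).prodMk (hasDerivAt_const _ _)
  exact (hg.hasFDerivAt.comp_hasDerivAt q1 h).deriv

lemma deriv_slice2 {g : ℝ × ℝ → ℝ} {q1 q2 : ℝ} (hg : DifferentiableAt ℝ g (q1, q2)) :
    deriv (fun s => g (q1, s)) q2 = fderiv ℝ g (q1, q2) ((0:ℝ), (1:ℝ)) := by
  have h : HasDerivAt (fun s : ℝ => ((q1 : ℝ), s)) (((0:ℝ), (1:ℝ)) : ℝ × ℝ) q2 :=
    (hasDerivAt_const _ _).prodMk (hasDerivAt_id _)
  exact (hg.hasFDerivAt.comp_hasDerivAt q2 h).deriv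

set_option maxHeartbeats 2000000 in
/-- Lemma 5.1: let `V` be smooth with `V ≠ 0` on `(0,∞)`, set
`u₁ = x₁ - ln|V(x₀)|`, `u₂ = -x₂ V(x₀) + V'(x₀)`, `w = (u₁,u₂)`.  Then for any smooth
`Φ, Ψ` on an open `U ⊆ ℝ²`, the functions
`A = -V Φ(u₁,u₂)`, `B = u₁ - Ψ_{u₂}(u₁,u₂) - V' Φ(u₁,u₂)`,
`C = -(1/V) Ψ_{u₁}(u₁,u₂) + (x₂V' - V'') Φ(u₁,u₂)`
satisfy the divergence equation and the three invariance PDEs on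
`{x₀ > 0} ∩ w⁻¹(U)`. -/
theorem stmt11 (V : ℝ → ℝ) (hV : ContDiff ℝ (⊤ : ℕ∞) V)
    (hVne : ∀ x : ℝ, 0 < x → V x ≠ 0)
    (U : Set (ℝ × ℝ)) (hU : IsOpen U)
    (Φ Ψ : ℝ × ℝ → ℝ)
    (hΦ : ContDiffOn ℝ (⊤ : ℕ∞) Φ U) (hΨ : ContDiffOn ℝ (⊤ : ℕ∞) Ψ U)
    (u₁ u₂ : ℝ × ℝ × ℝ → ℝ)
    (hu₁ : ∀ x : ℝ × ℝ × ℝ, u₁ x = x.2.1 - Real.log |V x.1|)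
    (hu₂ : ∀ x : ℝ × ℝ × ℝ, u₂ x = -x.2.2 * V x.1 + deriv V x.1)
    (A B C : ℝ × ℝ × ℝ → ℝ)
    (hA : ∀ x, A x = -V x.1 * Φ (u₁ x, u₂ x))
    (hB : ∀ x, B x = u₁ x - deriv (fun s => Ψ (u₁ x, s)) (u₂ x)
        - deriv V x.1 * Φ (u₁ x, u₂ x))
    (hC : ∀ x, C x = -(1 / V x.1) * deriv (fun s => Ψ (s, u₂ x)) (u₁ x)
        + (x.2.2 * deriv V x.1 - deriv (deriv V) x.1) * Φ (u₁ x, u₂ x)) :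
    ∀ x : ℝ × ℝ × ℝ, 0 < x.1 → (u₁ x, u₂ x) ∈ U →
      (pd0 A x + pd1 B x + pd2 C x = 1) ∧
      (V x.1 * pd0 A x + deriv V x.1 * pd1 A x
          + (-x.2.2 * deriv V x.1 + deriv (deriv V) x.1) * pd2 A x
        = deriv V x.1 * A x) ∧
      (V x.1 * pd0 B x + deriv V x.1 * pd1 B x
          + (-x.2.2 * deriv V x.1 + deriv (deriv V) x.1) * pd2 B x
        = deriv (deriv V) x.1 * A x) ∧
      (V x.1 * pd0 C x + deriv V x.1 * pd1 C x
          + (-x.2.2 * deriv V x.1 + deriv (deriv V) x.1) * pd2 C x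
        = (-x.2.2 * deriv (deriv V) x.1 + deriv (deriv (deriv V)) x.1) * A x
            - deriv V x.1 * C x) := by
  intro x hx0 hxU
  obtain ⟨a, b, c⟩ := x
  have hv0 : V a ≠ 0 := hVne a hx0
  -- smoothness of V and its derivatives
  have hVs : ContDiff ℝ (⊤ : ℕ∞) V := hV.of_le (by simp)
  have hVd : Differentiable ℝ V := hVs.differentiable (by norm_num)
  have hV1s : ContDiff ℝ (⊤ : ℕ∞) (deriv V) := (contDiff_infty_iff_deriv.mp hVs).2
  have hV2s : ContDiff ℝ (⊤ : ℕ∞) (deriv (deriv V)) := (contDiff_infty_iff_deriv.mp hV1s).2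
  have hVa : HasDerivAt V (deriv V a) a := (hVd a).hasDerivAt
  have hV1a : HasDerivAt (deriv V) (deriv (deriv V) a) a :=
    (hV1s.differentiable (by norm_num) a).hasDerivAt
  have hV2a : HasDerivAt (deriv (deriv V)) (deriv (deriv (deriv V)) a) a :=
    (hV2s.differentiable (by norm_num) a).hasDerivAt
  -- base point in U
  have hP : ((b - Real.log (V a), -c * V a + deriv V a) : ℝ × ℝ) ∈ U := by
    rw [hu₁, hu₂] at hxU
    simpa [Real.log_abs] using hxU
  -- differentiability at the base point
  have dΦ : DifferentiableAt ℝ Φ (b - Real.log (V a), -c * V a + deriv V a) := (hΦ.contDiffAt (hU.mem_nhds hP)).differentiableAt (by simp)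
  have dΨ : DifferentiableAt ℝ Ψ (b - Real.log (V a), -c * V a + deriv V a) := (hΨ.contDiffAt (hU.mem_nhds hP)).differentiableAt (by simp)
  have dΨ' : DifferentiableAt ℝ (fderiv ℝ Ψ) (b - Real.log (V a), -c * V a + deriv V a) :=
    ((hΨ.contDiffAt (hU.mem_nhds hP)).fderiv_right (m := (⊤:ℕ∞)) (by simp)).differentiableAt (by norm_num)
  -- named atoms
  obtain ⟨φ0, hφ0⟩ : ∃ z : ℝ, Φ (b - Real.log (V a), -c * V a + deriv V a) = z := ⟨_, rfl⟩
  obtain ⟨φ1, hφ1⟩ : ∃ z : ℝ, fderiv ℝ Φ (b - Real.log (V a), -c * V a + deriv V a) ((1:ℝ), (0:ℝ)) = z := ⟨_, rfl⟩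
  obtain ⟨φ2, hφ2⟩ : ∃ z : ℝ, fderiv ℝ Φ (b - Real.log (V a), -c * V a + deriv V a) ((0:ℝ), (1:ℝ)) = z := ⟨_, rfl⟩
  obtain ⟨ψ1, hψ1⟩ : ∃ z : ℝ, fderiv ℝ Ψ (b - Real.log (V a), -c * V a + deriv V a) ((1:ℝ), (0:ℝ)) = z := ⟨_, rfl⟩
  obtain ⟨m11, hm11⟩ : ∃ z : ℝ, fderiv ℝ (fderiv ℝ Ψ) (b - Real.log (V a), -c * V a + deriv V a) ((1:ℝ), (0:ℝ)) ((1:ℝ), (0:ℝ)) = z := ⟨_, rfl⟩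
  obtain ⟨m12, hm12⟩ : ∃ z : ℝ, fderiv ℝ (fderiv ℝ Ψ) (b - Real.log (V a), -c * V a + deriv V a) ((1:ℝ), (0:ℝ)) ((0:ℝ), (1:ℝ)) = z := ⟨_, rfl⟩
  obtain ⟨m21, hm21⟩ : ∃ z : ℝ, fderiv ℝ (fderiv ℝ Ψ) (b - Real.log (V a), -c * V a + deriv V a) ((0:ℝ), (1:ℝ)) ((1:ℝ), (0:ℝ)) = z := ⟨_, rfl⟩
  obtain ⟨m22, hm22⟩ : ∃ z : ℝ, fderiv ℝ (fderiv ℝ Ψ) (b - Real.log (V a), -c * V a + deriv V a) ((0:ℝ), (1:ℝ)) ((0:ℝ), (1:ℝ)) = z := ⟨_, rfl⟩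
  have hsym : m12 = m21 := by
    rw [← hm12, ← hm21]
    exact (hΨ.contDiffAt (hU.mem_nhds hP)).isSymmSndFDerivAt (by rw [minSmoothness_of_isRCLikeNormedField]; exact WithTop.coe_le_coe.mpr le_top) _ _
  have hfΦ : ∀ r s : ℝ, fderiv ℝ Φ (b - Real.log (V a), -c * V a + deriv V a) (r, s) = r * φ1 + s * φ2 := by
    intro r s
    rw [clm_decomp (fderiv ℝ Φ (b - Real.log (V a), -c * V a + deriv V a)) (r, s)]
    simp only [smul_eq_mul, hφ1, hφ2]
  have hfH1 : ∀ r s : ℝ, fderiv ℝ (fderiv ℝ Ψ) (b - Real.log (V a), -c * V a + deriv V a) (r, s) ((1:ℝ), (0:ℝ)) = r * m11 + s * m21 := by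
    intro r s
    rw [clm_decomp (fderiv ℝ (fderiv ℝ Ψ) (b - Real.log (V a), -c * V a + deriv V a)) (r, s)]
    simp only [ContinuousLinearMap.add_apply, ContinuousLinearMap.coe_smul', Pi.smul_apply, smul_eq_mul, hm11, hm21]
  have hfH2 : ∀ r s : ℝ, fderiv ℝ (fderiv ℝ Ψ) (b - Real.log (V a), -c * V a + deriv V a) (r, s) ((0:ℝ), (1:ℝ)) = r * m12 + s * m22 := by
    intro r s
    rw [clm_decomp (fderiv ℝ (fderiv ℝ Ψ) (b - Real.log (V a), -c * V a + deriv V a)) (r, s)]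
    simp only [ContinuousLinearMap.add_apply, ContinuousLinearMap.coe_smul', Pi.smul_apply, smul_eq_mul, hm12, hm22]
  -- curves
  have hlog : HasDerivAt (fun t => Real.log (V t)) (deriv V a / V a) a := hVa.log hv0
  have h01 : HasDerivAt (fun t => b - Real.log (V t)) (-(deriv V a / V a)) a := by
    exact ((hasDerivAt_const a b).sub hlog).congr_deriv (by ring)
  have h02 : HasDerivAt (fun t => -c * V t + deriv V t)
      (-c * deriv V a + deriv (deriv V) a) a := (hVa.const_mul (-c)).add hV1a
  have hγ0 : HasDerivAt (fun t => ((b - Real.log (V t), -c * V t + deriv V t) : ℝ × ℝ))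
      ((-(deriv V a / V a), -c * deriv V a + deriv (deriv V) a) : ℝ × ℝ) a := h01.prodMk h02
  have hid1 : HasDerivAt (fun t : ℝ => t - Real.log (V a)) 1 b := by
    simpa using (hasDerivAt_id b).sub_const (Real.log (V a))
  have hγ1 : HasDerivAt (fun t => ((t - Real.log (V a), -c * V a + deriv V a) : ℝ × ℝ))
      (((1:ℝ), (0:ℝ)) : ℝ × ℝ) b := hid1.prodMk (hasDerivAt_const b _)
  have h22c : HasDerivAt (fun t : ℝ => -t * V a + deriv V a) (-V a) c := by
    have h := ((hasDerivAt_id c).neg.mul_const (V a)).add_const (deriv V a)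
    exact h.congr_deriv (by ring)
  have hγ2 : HasDerivAt (fun t => ((b - Real.log (V a), -t * V a + deriv V a) : ℝ × ℝ))
      (((0 : ℝ), -V a) : ℝ × ℝ) c := (hasDerivAt_const c _).prodMk h22c
  -- Φ along the curves
  have hΦ0 : HasDerivAt (fun t => Φ (b - Real.log (V t), -c * V t + deriv V t)) (fderiv ℝ Φ (b - Real.log (V a), -c * V a + deriv V a) (-(deriv V a / V a), -c * deriv V a + deriv (deriv V) a)) a := hasDerivAt_comp2 dΦ hγ0
  have hΦ1 : HasDerivAt (fun t => Φ (t - Real.log (V a), -c * V a + deriv V a)) (fderiv ℝ Φ (b - Real.log (V a), -c * V a + deriv V a) ((1:ℝ), (0:ℝ))) b := hasDerivAt_comp2 dΦ hγ1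
  have hΦ2 : HasDerivAt (fun t => Φ (b - Real.log (V a), -t * V a + deriv V a)) (fderiv ℝ Φ (b - Real.log (V a), -c * V a + deriv V a) ((0 : ℝ), -V a)) c :=
    hasDerivAt_comp2 dΦ hγ2
  -- the partial-derivative functions of Ψ along the curves
  have hG1F : HasFDerivAt (fun q => fderiv ℝ Ψ q ((1:ℝ), (0:ℝ)))
      ((ContinuousLinearMap.apply ℝ ℝ (((1:ℝ), (0:ℝ)) : ℝ × ℝ)).comp (fderiv ℝ (fderiv ℝ Ψ) (b - Real.log (V a), -c * V a + deriv V a))) (b - Real.log (V a), -c * V a + deriv V a) :=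
    (ContinuousLinearMap.apply ℝ ℝ (((1:ℝ), (0:ℝ)) : ℝ × ℝ)).hasFDerivAt.comp _ dΨ'.hasFDerivAt
  have hG2F : HasFDerivAt (fun q => fderiv ℝ Ψ q ((0:ℝ), (1:ℝ)))
      ((ContinuousLinearMap.apply ℝ ℝ (((0:ℝ), (1:ℝ)) : ℝ × ℝ)).comp (fderiv ℝ (fderiv ℝ Ψ) (b - Real.log (V a), -c * V a + deriv V a))) (b - Real.log (V a), -c * V a + deriv V a) :=
    (ContinuousLinearMap.apply ℝ ℝ (((0:ℝ), (1:ℝ)) : ℝ × ℝ)).hasFDerivAt.comp _ dΨ'.hasFDerivAt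
  have hG1γ0 : HasDerivAt (fun t => fderiv ℝ Ψ (b - Real.log (V t), -c * V t + deriv V t) ((1:ℝ), (0:ℝ))) (fderiv ℝ (fderiv ℝ Ψ) (b - Real.log (V a), -c * V a + deriv V a) (-(deriv V a / V a), -c * deriv V a + deriv (deriv V) a) ((1:ℝ), (0:ℝ))) a :=
    (hG1F.comp_hasDerivAt a hγ0 :)
  have hG1γ1 : HasDerivAt (fun t => fderiv ℝ Ψ (t - Real.log (V a), -c * V a + deriv V a) ((1:ℝ), (0:ℝ))) (fderiv ℝ (fderiv ℝ Ψ) (b - Real.log (V a), -c * V a + deriv V a) ((1:ℝ), (0:ℝ)) ((1:ℝ), (0:ℝ))) b :=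
    (hG1F.comp_hasDerivAt b hγ1 :)
  have hG1γ2 : HasDerivAt (fun t => fderiv ℝ Ψ (b - Real.log (V a), -t * V a + deriv V a) ((1:ℝ), (0:ℝ))) (fderiv ℝ (fderiv ℝ Ψ) (b - Real.log (V a), -c * V a + deriv V a) ((0 : ℝ), -V a) ((1:ℝ), (0:ℝ))) c :=
    (hG1F.comp_hasDerivAt c hγ2 :)
  have hG2γ0 : HasDerivAt (fun t => fderiv ℝ Ψ (b - Real.log (V t), -c * V t + deriv V t) ((0:ℝ), (1:ℝ))) (fderiv ℝ (fderiv ℝ Ψ) (b - Real.log (V a), -c * V a + deriv V a) (-(deriv V a / V a), -c * deriv V a + deriv (deriv V) a) ((0:ℝ), (1:ℝ))) a :=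
    (hG2F.comp_hasDerivAt a hγ0 :)
  have hG2γ1 : HasDerivAt (fun t => fderiv ℝ Ψ (t - Real.log (V a), -c * V a + deriv V a) ((0:ℝ), (1:ℝ))) (fderiv ℝ (fderiv ℝ Ψ) (b - Real.log (V a), -c * V a + deriv V a) ((1:ℝ), (0:ℝ)) ((0:ℝ), (1:ℝ))) b :=
    (hG2F.comp_hasDerivAt b hγ1 :)
  have hG2γ2 : HasDerivAt (fun t => fderiv ℝ Ψ (b - Real.log (V a), -t * V a + deriv V a) ((0:ℝ), (1:ℝ))) (fderiv ℝ (fderiv ℝ Ψ) (b - Real.log (V a), -c * V a + deriv V a) ((0 : ℝ), -V a) ((0:ℝ), (1:ℝ))) c :=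
    (hG2F.comp_hasDerivAt c hγ2 :)
  -- eventual membership
  have hev0 : ∀ᶠ t in nhds a, ((b - Real.log (V t), -c * V t + deriv V t) : ℝ × ℝ) ∈ U :=
    hγ0.continuousAt.preimage_mem_nhds (hU.mem_nhds hP)
  have hev1 : ∀ᶠ t in nhds b, ((t - Real.log (V a), -c * V a + deriv V a) : ℝ × ℝ) ∈ U :=
    hγ1.continuousAt.preimage_mem_nhds (hU.mem_nhds hP)
  have hev2 : ∀ᶠ t in nhds c, ((b - Real.log (V a), -t * V a + deriv V a) : ℝ × ℝ) ∈ U :=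
    hγ2.continuousAt.preimage_mem_nhds (hU.mem_nhds hP)
  have hdiffU : ∀ q : ℝ × ℝ, q ∈ U → DifferentiableAt ℝ Ψ q := fun q hq =>
    (hΨ.contDiffAt (hU.mem_nhds hq)).differentiableAt (by simp)
  -- ==================== A ====================
  have eA0 : pd0 A (a, b, c) = -deriv V a * Φ (b - Real.log (V a), -c * V a + deriv V a) + -V a * fderiv ℝ Φ (b - Real.log (V a), -c * V a + deriv V a) (-(deriv V a / V a), -c * deriv V a + deriv (deriv V) a) := by
    have hfun : (fun t => A (t, b, c)) = fun t => -V t * Φ (b - Real.log (V t), -c * V t + deriv V t) := by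
      funext t
      simp only [hA, hu₁, hu₂, Real.log_abs]
    simp only [pd0]
    rw [hfun]
    exact (hVa.neg.mul hΦ0).deriv
  have eA1 : pd1 A (a, b, c) = 0 * Φ (b - Real.log (V a), -c * V a + deriv V a) + -V a * fderiv ℝ Φ (b - Real.log (V a), -c * V a + deriv V a) ((1:ℝ), (0:ℝ)) := by
    have hfun : (fun t => A (a, t, c)) = fun t => -V a * Φ (t - Real.log (V a), -c * V a + deriv V a) := by
      funext t
      simp only [hA, hu₁, hu₂, Real.log_abs]
    simp only [pd1]
    rw [hfun]
    exact ((hasDerivAt_const b (-V a)).mul hΦ1).deriv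
  have eA2 : pd2 A (a, b, c) = 0 * Φ (b - Real.log (V a), -c * V a + deriv V a) + -V a * fderiv ℝ Φ (b - Real.log (V a), -c * V a + deriv V a) ((0 : ℝ), -V a) := by
    have hfun : (fun t => A (a, b, t)) = fun t => -V a * Φ (b - Real.log (V a), -t * V a + deriv V a) := by
      funext t
      simp only [hA, hu₁, hu₂, Real.log_abs]
    simp only [pd2]
    rw [hfun]
    exact ((hasDerivAt_const c (-V a)).mul hΦ2).deriv
  -- ==================== B ====================
  have eB0 : pd0 B (a, b, c)
      = -(deriv V a / V a) - fderiv ℝ (fderiv ℝ Ψ) (b - Real.log (V a), -c * V a + deriv V a) (-(deriv V a / V a), -c * deriv V a + deriv (deriv V) a) ((0:ℝ), (1:ℝ))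
        - (deriv (deriv V) a * Φ (b - Real.log (V a), -c * V a + deriv V a) + deriv V a * fderiv ℝ Φ (b - Real.log (V a), -c * V a + deriv V a) (-(deriv V a / V a), -c * deriv V a + deriv (deriv V) a)) := by
    have hee : (fun t => B (t, b, c)) =ᶠ[nhds a]
        fun t => (b - Real.log (V t)) - fderiv ℝ Ψ (b - Real.log (V t), -c * V t + deriv V t) ((0:ℝ), (1:ℝ)) - deriv V t * Φ (b - Real.log (V t), -c * V t + deriv V t) := by
      filter_upwards [hev0] with t ht
      rw [hB, hu₁, hu₂]
      simp only [Real.log_abs]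
      rw [deriv_slice2 (hdiffU _ ht)]
    simp only [pd0]
    rw [hee.deriv_eq]
    exact ((h01.sub hG2γ0).sub (hV1a.mul hΦ0)).deriv
  have eB1 : pd1 B (a, b, c)
      = 1 - fderiv ℝ (fderiv ℝ Ψ) (b - Real.log (V a), -c * V a + deriv V a) ((1:ℝ), (0:ℝ)) ((0:ℝ), (1:ℝ)) - (0 * Φ (b - Real.log (V a), -c * V a + deriv V a) + deriv V a * fderiv ℝ Φ (b - Real.log (V a), -c * V a + deriv V a) ((1:ℝ), (0:ℝ))) := by
    have hee : (fun t => B (a, t, c)) =ᶠ[nhds b]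
        fun t => (t - Real.log (V a)) - fderiv ℝ Ψ (t - Real.log (V a), -c * V a + deriv V a) ((0:ℝ), (1:ℝ)) - deriv V a * Φ (t - Real.log (V a), -c * V a + deriv V a) := by
      filter_upwards [hev1] with t ht
      rw [hB, hu₁, hu₂]
      simp only [Real.log_abs]
      rw [deriv_slice2 (hdiffU _ ht)]
    simp only [pd1]
    rw [hee.deriv_eq]
    exact ((hid1.sub hG2γ1).sub ((hasDerivAt_const b (deriv V a)).mul hΦ1)).deriv
  have eB2 : pd2 B (a, b, c)
      = 0 - fderiv ℝ (fderiv ℝ Ψ) (b - Real.log (V a), -c * V a + deriv V a) ((0 : ℝ), -V a) ((0:ℝ), (1:ℝ))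
        - (0 * Φ (b - Real.log (V a), -c * V a + deriv V a) + deriv V a * fderiv ℝ Φ (b - Real.log (V a), -c * V a + deriv V a) ((0 : ℝ), -V a)) := by
    have hee : (fun t => B (a, b, t)) =ᶠ[nhds c]
        fun t => (b - Real.log (V a)) - fderiv ℝ Ψ (b - Real.log (V a), -t * V a + deriv V a) ((0:ℝ), (1:ℝ)) - deriv V a * Φ (b - Real.log (V a), -t * V a + deriv V a) := by
      filter_upwards [hev2] with t ht
      rw [hB, hu₁, hu₂]
      simp only [Real.log_abs]
      rw [deriv_slice2 (hdiffU _ ht)]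
    simp only [pd2]
    rw [hee.deriv_eq]
    exact (((hasDerivAt_const c (b - Real.log (V a))).sub hG2γ2).sub
      ((hasDerivAt_const c (deriv V a)).mul hΦ2)).deriv
  -- ==================== C ====================
  have h1V : HasDerivAt (fun t => -(1 / V t)) (deriv V a / V a ^ 2) a := by
    have h := ((hasDerivAt_const a (1 : ℝ)).div hVa hv0).neg
    exact h.congr_deriv (by ring)
  have eC0 : pd0 C (a, b, c)
      = (deriv V a / V a ^ 2 * fderiv ℝ Ψ (b - Real.log (V a), -c * V a + deriv V a) ((1:ℝ), (0:ℝ)) + -(1 / V a) * fderiv ℝ (fderiv ℝ Ψ) (b - Real.log (V a), -c * V a + deriv V a) (-(deriv V a / V a), -c * deriv V a + deriv (deriv V) a) ((1:ℝ), (0:ℝ)))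
        + ((c * deriv (deriv V) a - deriv (deriv (deriv V)) a) * Φ (b - Real.log (V a), -c * V a + deriv V a)
            + (c * deriv V a - deriv (deriv V) a) * fderiv ℝ Φ (b - Real.log (V a), -c * V a + deriv V a) (-(deriv V a / V a), -c * deriv V a + deriv (deriv V) a)) := by
    have hee : (fun t => C (t, b, c)) =ᶠ[nhds a]
        fun t => -(1 / V t) * fderiv ℝ Ψ (b - Real.log (V t), -c * V t + deriv V t) ((1:ℝ), (0:ℝ))
          + (c * deriv V t - deriv (deriv V) t) * Φ (b - Real.log (V t), -c * V t + deriv V t) := by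
      filter_upwards [hev0] with t ht
      rw [hC, hu₁, hu₂]
      simp only [Real.log_abs]
      rw [deriv_slice1 (hdiffU _ ht)]
    simp only [pd0]
    rw [hee.deriv_eq]
    exact ((h1V.mul hG1γ0).add (((hV1a.const_mul c).sub hV2a).mul hΦ0)).deriv
  have eC1 : pd1 C (a, b, c)
      = (0 * fderiv ℝ Ψ (b - Real.log (V a), -c * V a + deriv V a) ((1:ℝ), (0:ℝ)) + -(1 / V a) * fderiv ℝ (fderiv ℝ Ψ) (b - Real.log (V a), -c * V a + deriv V a) ((1:ℝ), (0:ℝ)) ((1:ℝ), (0:ℝ)))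
        + (0 * Φ (b - Real.log (V a), -c * V a + deriv V a) + (c * deriv V a - deriv (deriv V) a) * fderiv ℝ Φ (b - Real.log (V a), -c * V a + deriv V a) ((1:ℝ), (0:ℝ))) := by
    have hee : (fun t => C (a, t, c)) =ᶠ[nhds b]
        fun t => -(1 / V a) * fderiv ℝ Ψ (t - Real.log (V a), -c * V a + deriv V a) ((1:ℝ), (0:ℝ))
          + (c * deriv V a - deriv (deriv V) a) * Φ (t - Real.log (V a), -c * V a + deriv V a) := by
      filter_upwards [hev1] with t ht
      rw [hC, hu₁, hu₂]
      simp only [Real.log_abs]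
      rw [deriv_slice1 (hdiffU _ ht)]
    simp only [pd1]
    rw [hee.deriv_eq]
    exact (((hasDerivAt_const b (-(1 / V a))).mul hG1γ1).add
      ((hasDerivAt_const b (c * deriv V a - deriv (deriv V) a)).mul hΦ1)).deriv
  have hcoef : HasDerivAt (fun t : ℝ => t * deriv V a - deriv (deriv V) a) (deriv V a) c := by
    simpa using ((hasDerivAt_id c).mul_const (deriv V a)).sub_const (deriv (deriv V) a)
  have eC2 : pd2 C (a, b, c)
      = (0 * fderiv ℝ Ψ (b - Real.log (V a), -c * V a + deriv V a) ((1:ℝ), (0:ℝ)) + -(1 / V a) * fderiv ℝ (fderiv ℝ Ψ) (b - Real.log (V a), -c * V a + deriv V a) ((0 : ℝ), -V a) ((1:ℝ), (0:ℝ)))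
        + (deriv V a * Φ (b - Real.log (V a), -c * V a + deriv V a)
            + (c * deriv V a - deriv (deriv V) a) * fderiv ℝ Φ (b - Real.log (V a), -c * V a + deriv V a) ((0 : ℝ), -V a)) := by
    have hee : (fun t => C (a, b, t)) =ᶠ[nhds c]
        fun t => -(1 / V a) * fderiv ℝ Ψ (b - Real.log (V a), -t * V a + deriv V a) ((1:ℝ), (0:ℝ))
          + (t * deriv V a - deriv (deriv V) a) * Φ (b - Real.log (V a), -t * V a + deriv V a) := by
      filter_upwards [hev2] with t ht
      rw [hC, hu₁, hu₂]
      simp only [Real.log_abs]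
      rw [deriv_slice1 (hdiffU _ ht)]
    simp only [pd2]
    rw [hee.deriv_eq]
    exact (((hasDerivAt_const c (-(1 / V a))).mul hG1γ2).add (hcoef.mul hΦ2)).deriv
  -- values of A and C at the base point
  have eAx : A (a, b, c) = -V a * Φ (b - Real.log (V a), -c * V a + deriv V a) := by
    rw [hA, hu₁, hu₂]
    simp only [Real.log_abs]
  have eCx : C (a, b, c) = -(1 / V a) * fderiv ℝ Ψ (b - Real.log (V a), -c * V a + deriv V a) ((1:ℝ), (0:ℝ))
      + (c * deriv V a - deriv (deriv V) a) * Φ (b - Real.log (V a), -c * V a + deriv V a) := by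
    rw [hC, hu₁, hu₂]
    simp only [Real.log_abs]
    rw [deriv_slice1 dΨ]
  -- ==================== conclusion ====================
  refine ⟨?_, ?_, ?_, ?_⟩
  · rw [eA0, eB1, eC2]
    simp only [hfΦ, hfH1, hfH2, hφ0, hψ1]
    rw [hsym]
    field_simp
    ring
  · rw [eA0, eA1, eA2, eAx]
    simp only [hfΦ, hφ0]
    field_simp
    ring
  · rw [eB0, eB1, eB2, eAx]
    simp only [hfΦ, hfH2, hφ0]
    field_simp
    ring
  · rw [eC0, eC1, eC2, eAx, eCx]
    simp only [hfΦ, hfH1, hφ0, hψ1]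
    field_simp
    ring
end

section
/- Let ν : ℝ → [0,1] be a C^∞ function with ν(t) = 0 for t < 0 and ν(t) = 1 for t > 1 (such a function exists). Define Π = {(u₁,u₂) ∈ ℝ² : u₁ > 0, u₂ < 0} and Φ(u₁,u₂) = −(α+1)ν(−2u₁u₂e^{u₁} − 1)/(α u₁ u₂) on Π, Φ = 0 off Π, where α > 0 is fixed. Then Φ is C^∞ on all of ℝ². -/
open Real

/-- let `ν : ℝ → [0,1]` be `C^∞` with `ν = 0` on `(-∞,0)` and `ν = 1` on
`(1,∞)`, let `α > 0`, `Π = {u₁ > 0, u₂ < 0}`, and let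
`Φ(u₁,u₂) = -(α+1) ν(-2u₁u₂e^{u₁} - 1)/(α u₁ u₂)` on `Π` and `Φ = 0` off `Π`.
Then `Φ` is `C^∞` on all of `ℝ²`.  (Such a function `ν` exists.) -/
theorem stmt17 (α : ℝ) (hα : 0 < α)
    (ν : ℝ → ℝ) (hν : ContDiff ℝ (⊤ : ℕ∞) ν)
    (hν01 : ∀ t : ℝ, ν t ∈ Set.Icc (0 : ℝ) 1)
    (hν0 : ∀ t : ℝ, t < 0 → ν t = 0)
    (hν1 : ∀ t : ℝ, 1 < t → ν t = 1)
    (Φ : ℝ × ℝ → ℝ)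
    (hΦon : ∀ u : ℝ × ℝ, 0 < u.1 → u.2 < 0 →
      Φ u = -((α + 1) * ν (-2 * u.1 * u.2 * Real.exp u.1 - 1)) / (α * u.1 * u.2))
    (hΦoff : ∀ u : ℝ × ℝ, ¬(0 < u.1 ∧ u.2 < 0) → Φ u = 0) :
    ContDiff ℝ (⊤ : ℕ∞) Φ := by
  have hg : ContDiff ℝ (⊤ : ℕ∞) (fun v : ℝ × ℝ => -2 * v.1 * v.2 * Real.exp v.1 - 1) := by
    fun_prop
  rw [contDiff_iff_contDiffAt]
  intro u
  by_cases hu : 0 < u.1 ∧ u.2 < 0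
  · have hopen : IsOpen {v : ℝ × ℝ | 0 < v.1 ∧ v.2 < 0} :=
      (isOpen_lt continuous_const continuous_fst).inter
        (isOpen_lt continuous_snd continuous_const)
    have heq : Φ =ᶠ[nhds u]
        fun v => -((α + 1) * ν (-2 * v.1 * v.2 * Real.exp v.1 - 1)) / (α * v.1 * v.2) := by
      filter_upwards [hopen.mem_nhds hu] with v hv
      exact hΦon v hv.1 hv.2
    have hnum : ContDiffAt ℝ (⊤ : ℕ∞)
        (fun v : ℝ × ℝ => -((α + 1) * ν (-2 * v.1 * v.2 * Real.exp v.1 - 1))) u :=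
      ((contDiff_const.mul (hν.comp hg)).neg).contDiffAt
    have hden : ContDiffAt ℝ (⊤ : ℕ∞) (fun v : ℝ × ℝ => α * v.1 * v.2) u := by
      fun_prop
    have hne : α * u.1 * u.2 ≠ 0 :=
      mul_ne_zero (mul_ne_zero hα.ne' hu.1.ne') hu.2.ne
    exact ContDiffAt.congr_of_eventuallyEq (hnum.div hden hne) heq
  · have hN : {v : ℝ × ℝ | v.1 < 0} ∪ {v : ℝ × ℝ | 0 < v.2} ∪
        {v : ℝ × ℝ | -2 * v.1 * v.2 * Real.exp v.1 - 1 < 0} ∈ nhds u := by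
      have hopen : IsOpen ({v : ℝ × ℝ | v.1 < 0} ∪ {v : ℝ × ℝ | 0 < v.2} ∪
          {v : ℝ × ℝ | -2 * v.1 * v.2 * Real.exp v.1 - 1 < 0}) := by
        refine (((isOpen_lt continuous_fst continuous_const).union
          (isOpen_lt continuous_const continuous_snd)).union ?_)
        exact isOpen_lt hg.continuous continuous_const
      refine hopen.mem_nhds ?_
      rw [not_and_or, not_lt, not_lt] at hu
      rcases hu with h | h
      · rcases h.lt_or_eq with h' | h'
        · exact Or.inl (Or.inl h')
        · refine Or.inr ?_
          show -2 * u.1 * u.2 * Real.exp u.1 - 1 < 0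
          rw [h']; norm_num
      · rcases h.lt_or_eq with h' | h'
        · exact Or.inl (Or.inr h')
        · refine Or.inr ?_
          show -2 * u.1 * u.2 * Real.exp u.1 - 1 < 0
          rw [← h']; norm_num
    have heq : Φ =ᶠ[nhds u] fun _ => (0 : ℝ) := by
      filter_upwards [hN] with v hv
      by_cases hvP : 0 < v.1 ∧ v.2 < 0
      · rcases hv with (h | h) | h
        · exact absurd hvP.1 (asymm h)
        · exact absurd hvP.2 (asymm h)
        · rw [hΦon v hvP.1 hvP.2, hν0 _ h, mul_zero, neg_zero, zero_div]
      · exact hΦoff v hvP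
    exact contDiffAt_const.congr_of_eventuallyEq heq
end
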